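/- After BFS with predecessor-list construction from s completes, the paths obtained by backtracking through the predecessor lists from a node u are exactly the shortest paths from s to u, and each such path is enumerated exactly once. -/

import Mathlib

/-- A plain directed multigraph. -/
structure DGraph (V E : Type) where
  src : E → V
  tgt : E → V

/-- `G.IsWalk v es w`: the edge list `es` forms a walk from `v` to `w`. -/
def DGraph.IsWalk {V E : Type} (G : DGraph V E) : V → List E → V → Prop
  | v, [], w => v = w
  | v, e :: es, w => G.src e = v ∧ G.IsWalk (G.tgt e) es w

/-- Distance: minimum number of edges over all walks, `⊤` if unreachable. -/
noncomputable def DGraph.dist {V E : Type} (G : DGraph V E) (v w : V) : ℕ∞ :=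
  sInf {n : ℕ∞ | ∃ es : List E, G.IsWalk v es w ∧ (es.length : ℕ∞) = n}

/-- `getAllPaths`: backtracking enumeration of all paths (as edge lists) from `s` to a node,
following the predecessor lists, with fuel. -/
def allPaths {V E : Type} [DecidableEq V] (prevList : V → List (V × E)) (s : V) :
    ℕ → V → List (List E)
  | 0, _ => []
  | fuel + 1, u =>
      if u = s then [[]]
      else ((prevList u).map
        (fun p => (allPaths prevList s fuel p.1).map (fun es => es ++ [p.2]))).flatten

/-!
A shortest walk to `u ≠ s` splits at its last edge `e` into a shortest walk to `src e` followed
by `e`, where `dist s (src e) + 1 = dist s u`; these pairs `(src e, e)` are exactly the entries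
of `prevList u`. Induction on the fuel therefore shows that backtracking produces exactly the
shortest walks, as long as the fuel exceeds the distance, and `|V| + 1` does since a finite
distance is less than `|V|`. No walk is produced twice because walks obtained through different
entries of `prevList u` end in different edges.
-/

namespace DGraph

variable {V E : Type} (G : DGraph V E)

def IsShortestWalk (v : V) (es : List E) (w : V) : Prop :=
  G.IsWalk v es w ∧ (es.length : ℕ∞) = G.dist v w

variable {G}

theorem isWalk_append {u w : V} {a b : List E} :
    G.IsWalk u (a ++ b) w ↔ ∃ v, G.IsWalk u a v ∧ G.IsWalk v b w := by
  induction a generalizing u with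
  | nil => simp [IsWalk]
  | cons e a ih => simp [IsWalk, ih, and_assoc]

theorem dist_le_length {v w : V} {es : List E} (h : G.IsWalk v es w) :
    G.dist v w ≤ es.length :=
  sInf_le ⟨es, h, rfl⟩

theorem exists_isShortestWalk {v w : V} (h : G.dist v w ≠ ⊤) :
    ∃ es, G.IsShortestWalk v es w := by
  have hne : {n : ℕ∞ | ∃ es : List E, G.IsWalk v es w ∧ (es.length : ℕ∞) = n}.Nonempty := by
    by_contra hc
    exact h (by simp [dist, Set.not_nonempty_iff_eq_empty.mp hc])
  exact csInf_mem hne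

theorem dist_self (v : V) : G.dist v v = 0 :=
  nonpos_iff_eq_zero.mp (dist_le_length (es := []) rfl)

theorem dist_le_dist_add_length {u v w : V} {es : List E} (h : G.IsWalk v es w) :
    G.dist u w ≤ G.dist u v + es.length := by
  by_cases huv : G.dist u v = ⊤
  · simp [huv]
  obtain ⟨a, ha, hlen⟩ := exists_isShortestWalk huv
  calc G.dist u w ≤ (a ++ es).length := dist_le_length (isWalk_append.mpr ⟨v, ha, h⟩)
    _ = G.dist u v + es.length := by simp [← hlen]

theorem isShortestWalk_self_iff {v : V} {es : List E} : G.IsShortestWalk v es v ↔ es = [] := by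
  refine ⟨fun h => List.length_eq_zero_iff.mp ?_, fun h => h ▸ ⟨rfl, by simp [dist_self]⟩⟩
  exact_mod_cast h.2.trans (dist_self v)

theorem IsShortestWalk.of_append {u w : V} {a b : List E} (h : G.IsShortestWalk u (a ++ b) w) :
    ∃ v, G.IsShortestWalk u a v ∧ G.IsWalk v b w := by
  obtain ⟨v, ha, hb⟩ := isWalk_append.mp h.1
  refine ⟨v, ⟨ha, le_antisymm ?_ (dist_le_length ha)⟩, hb⟩
  have key : (a.length : ℕ∞) + b.length ≤ G.dist u v + b.length := by
    simpa [← h.2] using dist_le_dist_add_length (u := u) hb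
  exact (WithTop.add_le_add_iff_right (ENat.natCast_ne_top _)).mp key

theorem isShortestWalk_append_singleton_iff {v w : V} {a : List E} {e : E} :
    G.IsShortestWalk v (a ++ [e]) w ↔
      G.IsShortestWalk v a (G.src e) ∧ G.tgt e = w ∧ G.dist v (G.src e) + 1 = G.dist v w := by
  constructor
  · intro h
    obtain ⟨x, ha, hsrc, htgt⟩ := h.of_append
    subst hsrc
    refine ⟨ha, htgt, ?_⟩
    rw [← ha.2, ← h.2]
    simp
  · rintro ⟨ha, htgt, hdist⟩
    refine ⟨isWalk_append.mpr ⟨_, ha.1, rfl, htgt⟩, ?_⟩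
    rw [← hdist, ← ha.2]
    simp

theorem exists_dist_eq_of_le {v w : V} {n k : ℕ} (hw : G.dist v w = n) (hk : k ≤ n) :
    ∃ x, G.dist v x = k := by
  obtain ⟨es, hes⟩ := exists_isShortestWalk (hw ▸ ENat.natCast_ne_top n : G.dist v w ≠ ⊤)
  have hlen : es.length = n := by exact_mod_cast hes.2.trans hw
  rw [← List.take_append_drop k es] at hes
  obtain ⟨x, hx, -⟩ := hes.of_append
  refine ⟨x, hx.2.symm.trans ?_⟩
  simp [List.length_take, hlen, hk]

-- Pigeonhole: the vertices along a shortest walk of length `n` realize all distances `0, …, n`.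
theorem dist_lt_card [Fintype V] {v w : V} (h : G.dist v w ≠ ⊤) :
    G.dist v w < Fintype.card V := by
  lift G.dist v w to ℕ using h with n hn
  have hsub : Finset.range (n + 1) ⊆ Finset.univ.image fun x => (G.dist v x).toNat := by
    intro k hk
    obtain ⟨x, hx⟩ := exists_dist_eq_of_le hn.symm (Finset.mem_range_succ_iff.mp hk)
    exact Finset.mem_image.mpr ⟨x, Finset.mem_univ _, by simp [hx]⟩
  have := (Finset.card_le_card hsub).trans Finset.card_image_le
  rw [Finset.card_range, Finset.card_univ] at this
  exact_mod_cast this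

end DGraph

section allPaths

variable {V E : Type} [DecidableEq V] {prevList : V → List (V × E)} {s : V}

theorem allPaths_succ_self (fuel : ℕ) : allPaths prevList s (fuel + 1) s = [[]] := by
  simp [allPaths]

theorem mem_allPaths_succ_of_ne {fuel : ℕ} {u : V} (hu : u ≠ s) {es : List E} :
    es ∈ allPaths prevList s (fuel + 1) u ↔
      ∃ p ∈ prevList u, ∃ a ∈ allPaths prevList s fuel p.1, a ++ [p.2] = es := by
  simp [allPaths, hu]

-- Paths coming from different predecessor entries differ in their last edge.
theorem nodup_allPaths (hedges : ∀ x, x ≠ s → ((prevList x).map Prod.snd).Nodup) :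
    ∀ fuel u, (allPaths prevList s fuel u).Nodup
  | 0, _ => List.nodup_nil
  | fuel + 1, u => by
    by_cases hu : u = s
    · subst hu; simp [allPaths_succ_self]
    simp only [allPaths, if_neg hu, List.nodup_flatten, List.forall_mem_map, List.pairwise_map]
    refine ⟨fun p _ => (nodup_allPaths hedges fuel p.1).map (List.append_left_injective _), ?_⟩
    refine (List.pairwise_map.mp (hedges u hu)).imp fun hpq es hp hq => hpq ?_
    obtain ⟨a, -, rfl⟩ := List.mem_map.mp hp
    obtain ⟨b, -, hab⟩ := List.mem_map.mp hq
    simpa using congrArg List.getLast? hab.symm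

theorem mem_allPaths_iff (G : DGraph V E)
    (hinv : ∀ x : V, x ≠ s → ∀ p : V × E, p ∈ prevList x ↔
      (G.src p.2 = p.1 ∧ G.tgt p.2 = x ∧ G.dist s p.1 + 1 = G.dist s x)) :
    ∀ {fuel : ℕ} {u : V}, G.dist s u < fuel → ∀ es,
      es ∈ allPaths prevList s fuel u ↔ G.IsShortestWalk s es u
  | 0, _, hu, _ => absurd hu (by simp)
  | fuel + 1, u, hu, es => by
    by_cases hus : u = s
    · subst hus; simp [allPaths_succ_self, DGraph.isShortestWalk_self_iff]
    have ih : ∀ p ∈ prevList u, ∀ a,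
        a ∈ allPaths prevList s fuel p.1 ↔ G.IsShortestWalk s a p.1 := by
      intro p hp
      refine mem_allPaths_iff G hinv (lt_of_add_lt_add_right (a := 1) ?_)
      rw [((hinv u hus p).mp hp).2.2]
      exact_mod_cast hu
    rw [mem_allPaths_succ_of_ne hus]
    constructor
    · rintro ⟨p, hp, a, ha, rfl⟩
      obtain ⟨hsrc, htgt, hdist⟩ := (hinv u hus p).mp hp
      rw [DGraph.isShortestWalk_append_singleton_iff, hsrc]
      exact ⟨(ih p hp a).mp ha, htgt, hdist⟩
    · intro h
      rcases es.eq_nil_or_concat with rfl | ⟨a, e, rfl⟩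
      · exact absurd h.1.symm hus
      rw [List.concat_eq_append] at h ⊢
      rw [DGraph.isShortestWalk_append_singleton_iff] at h
      obtain ⟨ha, htgt, hdist⟩ := h
      have hp : (G.src e, e) ∈ prevList u := (hinv u hus _).mpr ⟨rfl, htgt, hdist⟩
      exact ⟨_, hp, a, (ih _ hp a).mpr ha, rfl⟩

end allPaths

/-- after BFS with predecessor lists completes (so that `prevList(x)` holds
exactly the pairs `(w,e)` with `e` an edge from `w` to `x` and `dist(s,w)+1 = dist(s,x)`),
backtracking from a reachable node `u` enumerates exactly the shortest paths from `s` to `u`,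
each exactly once. -/
theorem getAllPaths_enumerates_shortest_paths {V E : Type} [DecidableEq V] [Fintype V]
    (G : DGraph V E) (s u : V) (prevList : V → List (V × E))
    (hinv : ∀ x : V, x ≠ s → ∀ p : V × E, p ∈ prevList x ↔
      (G.src p.2 = p.1 ∧ G.tgt p.2 = x ∧ G.dist s p.1 + 1 = G.dist s x))
    (hnd : ∀ x : V, (prevList x).Nodup)
    (hreach : G.dist s u ≠ ⊤) :
    (allPaths prevList s (Fintype.card V + 1) u).Nodup ∧
    ∀ es : List E, es ∈ allPaths prevList s (Fintype.card V + 1) u ↔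
      (G.IsWalk s es u ∧ (es.length : ℕ∞) = G.dist s u) := by
  have hedges : ∀ x, x ≠ s → ((prevList x).map Prod.snd).Nodup := fun x hx =>
    (hnd x).map_on fun p hp q hq he =>
      Prod.ext (by rw [← ((hinv x hx p).mp hp).1, ← ((hinv x hx q).mp hq).1, he]) he
  have hfuel : G.dist s u < (Fintype.card V + 1 : ℕ) :=
    (DGraph.dist_lt_card hreach).trans (by exact_mod_cast Nat.lt_succ_self _)
  exact ⟨nodup_allPaths hedges _ _, mem_allPaths_iff G hinv hfuel⟩
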